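/- arXiv:0812.2554 — 10 statements merged into one kernel-verified Lean document; each statement's English description precedes it below -/
import Mathlib

section
/- Let H be a Hilbert space, a a closed positive quadratic form with form domain H¹ (dense in H), and H¹₀ a closed subspace of H¹ (in the form inner product) which is dense in H. Let A_N and A_D be the self-adjoint operators generated by a on H¹ and by the restriction of a to H¹₀ respectively. Then for all u in H¹ and v in H¹₀, a[A_D⁻¹u, v] = (u,v) = a[A_N⁻¹u, v], and consequently A_D⁻¹ = Π₀ A_N⁻¹, where Π₀ denotes the orthogonal projection of H¹ (with inner product a[·,·]) onto H¹₀. -/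
/- `H1` is the form domain with inner product `a[·,·]`, embedded in `H` by `J`;
`TN = A_N⁻¹` and `TD = A_D⁻¹` are encoded by their weak characterizations
`a[A_N⁻¹ u, v] = (u, v)` for `v ∈ H1`, and `A_D⁻¹ u ∈ H0`, `a[A_D⁻¹ u, v] = (u, v)` for `v ∈ H0`.

Both `TD u` and the projection of `TN u` onto `H0` are the element of `H0` that represents
`v ↦ (u, v)` on `H0`; since `TN u - TD u` is then `a`-orthogonal to `H0`, they coincide. -/

open scoped InnerProductSpace

local notation "⟪" x ", " y "⟫" => @inner ℂ _ _ x y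

theorem Submodule.starProjection_eq_of_mem_of_inner_eq {𝕜 E : Type*} [RCLike 𝕜]
    [NormedAddCommGroup E] [InnerProductSpace 𝕜 E] (K : Submodule 𝕜 E)
    [K.HasOrthogonalProjection] {u v : E} (hv : v ∈ K)
    (hinner : ∀ w ∈ K, inner 𝕜 v w = inner 𝕜 u w) :
    K.starProjection u = v :=
  K.eq_starProjection_of_mem_of_inner_eq_zero hv fun w hw => by
    rw [inner_sub_left, hinner w hw, sub_self]

theorem stmt0_general
    {H H1 : Type*} [NormedAddCommGroup H] [InnerProductSpace ℂ H]
    [NormedAddCommGroup H1] [InnerProductSpace ℂ H1]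
    (J : H1 →L[ℂ] H)
    (H0 : Submodule ℂ H1) [CompleteSpace H0]
    (TN : H →L[ℂ] H1) (hTN : ∀ (u : H) (v : H1), ⟪TN u, v⟫ = ⟪u, J v⟫)
    (TD : H →L[ℂ] H1) (hTDmem : ∀ u : H, TD u ∈ H0)
    (hTD : ∀ (u : H), ∀ v ∈ H0, ⟪TD u, (v : H1)⟫ = ⟪u, J v⟫) :
    (∀ (u : H), ∀ v ∈ H0, ⟪TD u, (v : H1)⟫ = ⟪u, J v⟫ ∧ ⟪TN u, (v : H1)⟫ = ⟪u, J v⟫)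
      ∧ ∀ u : H, TD u = (H0.orthogonalProjectionOnto (TN u) : H1) :=
  ⟨fun u v hv => ⟨hTD u v hv, hTN u v⟩, fun u =>
    (H0.starProjection_eq_of_mem_of_inner_eq (hTDmem u) fun w hw => by
      rw [hTD u w hw, hTN u w]).symm⟩

theorem stmt0
    {H H1 : Type*} [NormedAddCommGroup H] [InnerProductSpace ℂ H] [CompleteSpace H]
    [NormedAddCommGroup H1] [InnerProductSpace ℂ H1] [CompleteSpace H1]
    (J : H1 →L[ℂ] H) (hJinj : Function.Injective J) (hJdense : DenseRange J)
    (H0 : Submodule ℂ H1) [CompleteSpace H0]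
    (hH0dense : DenseRange (fun v : H0 => J v))
    (TN : H →L[ℂ] H1) (hTN : ∀ (u : H) (v : H1), ⟪TN u, v⟫ = ⟪u, J v⟫)
    (TD : H →L[ℂ] H1) (hTDmem : ∀ u : H, TD u ∈ H0)
    (hTD : ∀ (u : H), ∀ v ∈ H0, ⟪TD u, (v : H1)⟫ = ⟪u, J v⟫) :
    (∀ (u : H), ∀ v ∈ H0, ⟪TD u, (v : H1)⟫ = ⟪u, J v⟫ ∧ ⟪TN u, (v : H1)⟫ = ⟪u, J v⟫)
      ∧ ∀ u : H, TD u = (H0.orthogonalProjectionOnto (TN u) : H1) :=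
  stmt0_general J H0 TN hTN TD hTDmem hTD
end

section
/- With the notation above, let H¹_A be the set of u ∈ H¹ such that the functional v ↦ a[u,v] on H¹₀ is continuous in the norm of H, and let A : H¹_A → H be defined by (Au, v) = a[u,v] for all v ∈ H¹₀. Let G₀ = ker A = {u ∈ H¹_A : Au = 0}. Then H¹_A = G₀ ∔ D(A_B) (direct sum in H) for B ∈ {N, D}, and if w₀ ∈ G₀ and w_B ∈ D(A_B), then A(w₀ + w_B) = A_B w_B. -/
noncomputable section

open scoped InnerProductSpace

local notation "⟪" x ", " y "⟫" => @inner ℂ _ _ x y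

variable {H H1 : Type*} [NormedAddCommGroup H] [InnerProductSpace ℂ H] [CompleteSpace H]
  [NormedAddCommGroup H1] [InnerProductSpace ℂ H1] [CompleteSpace H1]

/-- `MemA J H0 u f` says that `u` belongs to the domain `H¹_A` of the maximal
operator `A` (i.e. the functional `v ↦ a[u,v]` on `H0` is `H`-continuous) and
`A u = f`:  `a[u, v] = (f, v)` for all `v ∈ H0`. -/
def MemA (J : H1 →L[ℂ] H) (H0 : Submodule ℂ H1) (u : H1) (f : H) : Prop :=
  ∀ v ∈ H0, ⟪u, (v : H1)⟫ = ⟪f, J v⟫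

/- `A_N, A_D` are the self-adjoint operators generated by the form on `H1` resp. `H0`,
with bounded inverses `TN, TD` (as maps `H → H1`).  `G₀ = ker A`, `D(A_B) = range T_B`,
and `A_B (T_B g) = g`.  The claim: `H¹_A = G₀ ∔ D(A_B)` (direct sum) for `B ∈ {N, D}`,
and `A (w₀ + w_B) = A_B w_B`. -/
theorem stmt1
    (J : H1 →L[ℂ] H) (hJinj : Function.Injective J) (hJdense : DenseRange J)
    (H0 : Submodule ℂ H1) [CompleteSpace H0]
    (hH0dense : DenseRange (fun v : H0 => J v))
    (TN : H →L[ℂ] H1) (hTN : ∀ (u : H) (v : H1), ⟪TN u, v⟫ = ⟪u, J v⟫)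
    (TD : H →L[ℂ] H1) (hTDmem : ∀ u : H, TD u ∈ H0)
    (hTD : ∀ (u : H), ∀ v ∈ H0, ⟪TD u, (v : H1)⟫ = ⟪u, J v⟫) :
    -- existence of the decomposition, and `A(w₀ + w_B) = A_B w_B`
    (∀ (u : H1) (f : H), MemA J H0 u f →
      ∃ (w0 : H1) (g : H), MemA J H0 w0 0 ∧ u = w0 + TN g ∧ f = g) ∧
    (∀ (u : H1) (f : H), MemA J H0 u f →
      ∃ (w0 : H1) (g : H), MemA J H0 w0 0 ∧ u = w0 + TD g ∧ f = g) ∧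
    -- `G₀ ∔ D(A_B) ⊆ H¹_A` with `A(w₀ + T_B g) = g`
    (∀ (w0 : H1) (g : H), MemA J H0 w0 0 → MemA J H0 (w0 + TN g) g) ∧
    (∀ (w0 : H1) (g : H), MemA J H0 w0 0 → MemA J H0 (w0 + TD g) g) ∧
    -- the sums are direct: uniqueness of the decomposition
    (∀ (w0 w0' : H1) (g g' : H), MemA J H0 w0 0 → MemA J H0 w0' 0 →
      w0 + TN g = w0' + TN g' → w0 = w0' ∧ g = g') ∧
    (∀ (w0 w0' : H1) (g g' : H), MemA J H0 w0 0 → MemA J H0 w0' 0 →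
      w0 + TD g = w0' + TD g' → w0 = w0' ∧ g = g') := by
  have key : ∀ h : H, (∀ v ∈ H0, (⟪h, J v⟫ : ℂ) = 0) → h = 0 := by
    intro h hz
    have hall : ∀ x : H, (⟪h, x⟫ : ℂ) = 0 := by
      intro x
      have hx : x ∈ closure (Set.range fun v : H0 => J v) := hH0dense x
      have hcl : IsClosed {y : H | (⟪h, y⟫ : ℂ) = 0} :=
        isClosed_eq (continuous_const.inner continuous_id) continuous_const
      have hsub : Set.range (fun v : H0 => J v) ⊆ {y : H | (⟪h, y⟫ : ℂ) = 0} := by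
        rintro _ ⟨v, rfl⟩
        exact hz v v.2
      exact (hcl.closure_subset_iff.mpr hsub) hx
    exact inner_self_eq_zero.mp (hall h)
  refine ⟨?_, ?_, ?_, ?_, ?_, ?_⟩
  · intro u f hu
    refine ⟨u - TN f, f, ?_, by abel, rfl⟩
    intro v hv
    simp [inner_sub_left, hu v hv, hTN f v]
  · intro u f hu
    refine ⟨u - TD f, f, ?_, by abel, rfl⟩
    intro v hv
    simp [inner_sub_left, hu v hv, hTD f v hv]
  · intro w0 g hw0 v hv
    simp [inner_add_left, hw0 v hv, hTN g v]
  · intro w0 g hw0 v hv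
    simp [inner_add_left, hw0 v hv, hTD g v hv]
  · intro w0 w0' g g' h0 h0' heq
    have hgz : g = g' := by
      have : g - g' = 0 := by
        apply key
        intro v hv
        have h1 : (⟪w0 + TN g, (v : H1)⟫ : ℂ) = ⟪w0' + TN g', (v : H1)⟫ := by rw [heq]
        rw [inner_add_left, inner_add_left, h0 v hv, h0' v hv, hTN g v, hTN g' v] at h1
        simp only [inner_sub_left]
        simpa using sub_eq_zero.mpr h1
      have := sub_eq_zero.mp this
      exact this
    subst hgz
    exact ⟨by simpa using heq, rfl⟩
  · intro w0 w0' g g' h0 h0' heq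
    have hgz : g = g' := by
      have : g - g' = 0 := by
        apply key
        intro v hv
        have h1 : (⟪w0 + TD g, (v : H1)⟫ : ℂ) = ⟪w0' + TD g', (v : H1)⟫ := by rw [heq]
        rw [inner_add_left, inner_add_left, h0 v hv, h0' v hv, hTD g v hv, hTD g' v hv] at h1
        simp only [inner_sub_left]
        simpa using sub_eq_zero.mpr h1
      exact sub_eq_zero.mp this
    subst hgz
    exact ⟨by simpa using heq, rfl⟩

end
end

section
/- With the notation above, for every complex z and B ∈ {N, D}: (I − z A_B⁻¹) G_z = G₀ ∩ (I − z A_B⁻¹) H¹. That is, a vector w ∈ G₀ lies in the image of G_z under I − z A_B⁻¹ if and only if w = (I − z A_B⁻¹)u for some u ∈ H¹, and conversely any u ∈ H¹ with (I − z A_B⁻¹)u ∈ G₀ belongs to G_z. -/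
noncomputable section

open scoped InnerProductSpace

local notation "⟪" x ", " y "⟫" => @inner ℂ _ _ x y

variable {H H1 : Type*} [NormedAddCommGroup H] [InnerProductSpace ℂ H] [CompleteSpace H]
  [NormedAddCommGroup H1] [InnerProductSpace ℂ H1] [CompleteSpace H1]

theorem memA_sub_iff {E F : Type*} [NormedAddCommGroup E] [InnerProductSpace ℂ E]
    [NormedAddCommGroup F] [InnerProductSpace ℂ F] {J : F →L[ℂ] E} {H0 : Submodule ℂ F}
    {u w : F} {f : E} (hw : MemA J H0 w f) : MemA J H0 (u - w) 0 ↔ MemA J H0 u f := by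
  refine forall₂_congr fun v hv => ?_
  rw [inner_sub_left, hw v hv, inner_zero_left, sub_eq_zero]

theorem stmt5_general
    (J : H1 →L[ℂ] H)
    (H0 : Submodule ℂ H1)
    (TN : H →L[ℂ] H1) (hTN : ∀ (u : H) (v : H1), ⟪TN u, v⟫ = ⟪u, J v⟫)
    (TD : H →L[ℂ] H1)
    (hTD : ∀ (u : H), ∀ v ∈ H0, ⟪TD u, (v : H1)⟫ = ⟪u, J v⟫) :
    ∀ (z : ℂ) (u : H1),
      (MemA J H0 u (z • J u) ↔ MemA J H0 (u - z • TN (J u)) 0) ∧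
      (MemA J H0 u (z • J u) ↔ MemA J H0 (u - z • TD (J u)) 0) := by
  intro z u
  have hN : ∀ f, MemA J H0 (TN f) f := fun f v _ => hTN f v
  rw [← TN.map_smul, ← TD.map_smul]
  exact ⟨(memA_sub_iff (hN _)).symm, (memA_sub_iff (hTD _)).symm⟩

theorem stmt5
    (J : H1 →L[ℂ] H) (hJinj : Function.Injective J) (hJdense : DenseRange J)
    (H0 : Submodule ℂ H1) [CompleteSpace H0]
    (hH0dense : DenseRange (fun v : H0 => J v))
    (TN : H →L[ℂ] H1) (hTN : ∀ (u : H) (v : H1), ⟪TN u, v⟫ = ⟪u, J v⟫)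
    (TD : H →L[ℂ] H1) (hTDmem : ∀ u : H, TD u ∈ H0)
    (hTD : ∀ (u : H), ∀ v ∈ H0, ⟪TD u, (v : H1)⟫ = ⟪u, J v⟫) :
    ∀ (z : ℂ) (u : H1),
      (MemA J H0 u (z • J u) ↔ MemA J H0 (u - z • TN (J u)) 0) ∧
      (MemA J H0 u (z • J u) ↔ MemA J H0 (u - z • TD (J u)) 0) :=
  stmt5_general J H0 TN hTN TD hTD

end
end

section
/- With the notation above, for each real λ, define B_λ := (I − λ Π'_λ A_N⁻¹)|_{G_λ}, where Π'_λ is the a-orthogonal projection of H¹ onto G_λ. Then a[B_λ u, v] = a[u,v] − λ(u,v) for all u, v ∈ G_λ, and consequently B_λ is a bounded self-adjoint operator in the Hilbert space G_λ equipped with the inner product a[·,·]. -/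
/-!
`A_N⁻¹` is characterised by `a[A_N⁻¹ f, v] = (f, v)`, i.e. it is the `a`-adjoint `J†` of the
embedding `J : H¹ → H`. Hence `J† J` is `a`-self-adjoint on `H¹`, and so is its compression
`Π'_λ J† J |_{G_λ}` to the closed subspace `G_λ`; `B_λ = I - λ Π'_λ J† J |_{G_λ}` with `λ` real.
The identity for `a[B_λ u, v]` is the defining property of `J†` together with
`a[Π'_λ w, v] = a[w, v]` for `v ∈ G_λ`.
-/

noncomputable section

open scoped InnerProductSpace

local notation "⟪" x ", " y "⟫" => @inner ℂ _ _ x y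

variable {H H1 : Type*} [NormedAddCommGroup H] [InnerProductSpace ℂ H] [CompleteSpace H]
  [NormedAddCommGroup H1] [InnerProductSpace ℂ H1] [CompleteSpace H1]

section Compression

open ContinuousLinearMap

variable {𝕜 E F : Type*} [RCLike 𝕜] [NormedAddCommGroup E] [InnerProductSpace 𝕜 E]
  [NormedAddCommGroup F] [InnerProductSpace 𝕜 F]

theorem inner_compression_apply (T : E →L[𝕜] E) (K : Submodule 𝕜 E) [K.HasOrthogonalProjection]
    (u v : K) : inner 𝕜 ((K.orthogonalProjectionOnto ∘L T ∘L K.subtypeL) u : E) (v : E) =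
      inner 𝕜 (T u) (v : E) :=
  (K.coe_inner _ _).symm.trans (K.inner_orthogonalProjectionOnto_eq_of_mem_right v (T u))

variable [CompleteSpace E] [CompleteSpace F]

theorem isSelfAdjoint_adjoint_comp_self (J : E →L[𝕜] F) : IsSelfAdjoint (adjoint J ∘L J) := by
  rw [IsSelfAdjoint, star_eq_adjoint, adjoint_comp, adjoint_adjoint]

theorem IsSelfAdjoint.compression {T : E →L[𝕜] E} (hT : IsSelfAdjoint T)
    (K : Submodule 𝕜 E) [CompleteSpace K] :
    IsSelfAdjoint (K.orthogonalProjectionOnto ∘L T ∘L K.subtypeL) := by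
  rw [IsSelfAdjoint, star_eq_adjoint, adjoint_comp, adjoint_comp, K.adjoint_subtypeL,
    K.adjoint_orthogonalProjectionOnto, hT.adjoint_eq, comp_assoc]

end Compression

theorem stmt7_general
    (J : H1 →L[ℂ] H)
    (TN : H →L[ℂ] H1) (hTN : ∀ (u : H) (v : H1), ⟪TN u, v⟫ = ⟪u, J v⟫)
    (lam : ℝ) (Gl : Submodule ℂ H1) [CompleteSpace Gl]
    (Bl : Gl →L[ℂ] Gl)
    (hBl : Bl = ContinuousLinearMap.id ℂ Gl -
      (lam : ℂ) • (Gl.orthogonalProjectionOnto.comp ((TN.comp J).comp Gl.subtypeL))) :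
    (∀ u v : Gl, ⟪((Bl u : Gl) : H1), (v : H1)⟫
        = ⟪(u : H1), (v : H1)⟫ - (lam : ℂ) * ⟪J (u : H1), J (v : H1)⟫) ∧
    IsSelfAdjoint Bl := by
  subst hBl
  refine ⟨fun u v => ?_, ?_⟩
  · rw [sub_apply, Submodule.coe_sub, inner_sub_left, smul_apply, Submodule.coe_smul,
      inner_smul_left, inner_compression_apply, ContinuousLinearMap.comp_apply, hTN,
      Complex.conj_ofReal, ContinuousLinearMap.id_apply]
  · rw [(ContinuousLinearMap.eq_adjoint_iff TN J).2 hTN]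
    exact IsSelfAdjoint.sub (R := Gl →L[ℂ] Gl) (IsSelfAdjoint.one _)
      (IsSelfAdjoint.smul (A := Gl →L[ℂ] Gl) (Complex.conj_ofReal lam)
        ((isSelfAdjoint_adjoint_comp_self J).compression Gl))

theorem stmt7
    (J : H1 →L[ℂ] H) (hJinj : Function.Injective J) (hJdense : DenseRange J)
    (H0 : Submodule ℂ H1) [CompleteSpace H0]
    (hH0dense : DenseRange (fun v : H0 => J v))
    (TN : H →L[ℂ] H1) (hTN : ∀ (u : H) (v : H1), ⟪TN u, v⟫ = ⟪u, J v⟫)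
    (lam : ℝ) (Gl : Submodule ℂ H1) [CompleteSpace Gl]
    (hGl : ∀ u : H1, u ∈ Gl ↔ MemA J H0 u ((lam : ℂ) • J u))
    (Bl : Gl →L[ℂ] Gl)
    (hBl : Bl = ContinuousLinearMap.id ℂ Gl -
      (lam : ℂ) • (Gl.orthogonalProjectionOnto.comp ((TN.comp J).comp Gl.subtypeL))) :
    (∀ u v : Gl, ⟪((Bl u : Gl) : H1), (v : H1)⟫
        = ⟪(u : H1), (v : H1)⟫ - (lam : ℂ) * ⟪J (u : H1), J (v : H1)⟫) ∧
    IsSelfAdjoint Bl :=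
  stmt7_general J TN hTN lam Gl Bl hBl

end
end

section
/- With the notation above, (abstract Filonov estimate) for every real λ, a[u] ≤ λ‖u‖² for all u in the sum of subspaces χ_{[0,λ]}(A_D)H + E_N(λ)H + G_λ⁰ + G_λ⁻, where χ_{[0,λ]}(A_D) is the spectral projection of A_D for the interval [0,λ], E_N(λ) projects onto ker(A_N − λI), G_λ⁰ = ker B_λ, and G_λ⁻ is the spectral subspace of B_λ for (−∞, 0). -/
noncomputable section

open scoped InnerProductSpace

local notation "⟪" x ", " y "⟫" => @inner ℂ _ _ x y

variable {H H1 : Type*} [NormedAddCommGroup H] [InnerProductSpace ℂ H] [CompleteSpace H]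
  [NormedAddCommGroup H1] [InnerProductSpace ℂ H1] [CompleteSpace H1]

open ComplexConjugate in
/- Abstract Filonov estimate: `a[u] ≤ λ ‖u‖²` for every
`u ∈ χ_{[0,λ]}(A_D) H + E_N(λ) H + G_λ⁰ + G_λ⁻`.  Here `u₁ = A_D⁻¹ g = TD g` lies
in `D(A_D)` with `(A_D u₁, u₁) ≤ λ ‖u₁‖²` (which holds for all
`u₁ ∈ χ_{[0,λ]}(A_D)H`), `u₂` is a Neumann eigenvector with eigenvalue `λ`, and
`u₃ ∈ G_λ` satisfies `a[u₃] ≤ λ ‖u₃‖²` (which characterizes membership in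
`G_λ⁰ + G_λ⁻ = χ_{(-∞,0]}(B_λ) G_λ`, since `a[B_λ u, u] = a[u] - λ‖u‖²`). -/
theorem stmt9
    (J : H1 →L[ℂ] H) (hJinj : Function.Injective J) (hJdense : DenseRange J)
    (H0 : Submodule ℂ H1) [CompleteSpace H0]
    (hH0dense : DenseRange (fun v : H0 => J v))
    (TN : H →L[ℂ] H1) (hTN : ∀ (u : H) (v : H1), ⟪TN u, v⟫ = ⟪u, J v⟫)
    (TD : H →L[ℂ] H1) (hTDmem : ∀ u : H, TD u ∈ H0)
    (hTD : ∀ (u : H), ∀ v ∈ H0, ⟪TD u, (v : H1)⟫ = ⟪u, J v⟫)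
    (lam : ℝ) :
    ∀ (u1 u2 u3 : H1) (g : H),
      TD g = u1 → (⟪g, J u1⟫).re ≤ lam * ‖J u1‖ ^ 2 →
      u2 = (lam : ℂ) • TN (J u2) →
      MemA J H0 u3 ((lam : ℂ) • J u3) → ‖u3‖ ^ 2 ≤ lam * ‖J u3‖ ^ 2 →
      ‖u1 + u2 + u3‖ ^ 2 ≤ lam * ‖J (u1 + u2 + u3)‖ ^ 2 := by
  intro u1 u2 u3 g hg hu1 h2eq h3A h3n
  have h1mem : u1 ∈ H0 := hg ▸ hTDmem g
  have h11 : ⟪u1, u1⟫ = ⟪g, J u1⟫ := by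
    have := hTD g u1 h1mem
    rwa [hg] at this
  have h2 : ∀ v : H1, ⟪u2, v⟫ = (lam : ℂ) * ⟪J u2, J v⟫ := by
    intro v
    conv_lhs => rw [h2eq]
    rw [inner_smul_left, hTN]
    simp [Complex.conj_ofReal]
  have h3 : ∀ v ∈ H0, ⟪u3, v⟫ = (lam : ℂ) * ⟪J u3, J v⟫ := by
    intro v hv
    rw [h3A v hv, inner_smul_left]
    simp [Complex.conj_ofReal]
  have e21 := h2 u1
  have e22 := h2 u2
  have e23 := h2 u3
  have e31 := h3 u1 h1mem
  have e12 : ⟪u1, u2⟫ = (lam : ℂ) * ⟪J u1, J u2⟫ := by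
    rw [← inner_conj_symm u1 u2, e21]
    simp [Complex.conj_ofReal, mul_comm]
  have e13 : ⟪u1, u3⟫ = (lam : ℂ) * ⟪J u1, J u3⟫ := by
    rw [← inner_conj_symm u1 u3, e31]
    simp [Complex.conj_ofReal, mul_comm]
  have e32 : ⟪u3, u2⟫ = (lam : ℂ) * ⟪J u3, J u2⟫ := by
    rw [← inner_conj_symm u3 u2, e23]
    simp [Complex.conj_ofReal, mul_comm]
  have key : ⟪u1 + u2 + u3, u1 + u2 + u3⟫
      = ⟪g, J u1⟫ + ⟪u3, u3⟫ + (lam : ℂ) *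
        (⟪J (u1 + u2 + u3), J (u1 + u2 + u3)⟫ - ⟪J u1, J u1⟫ - ⟪J u3, J u3⟫) := by
    simp only [map_add, inner_add_left, inner_add_right, e12, e21, e22, e23, e31, e13, e32,
      h11]
    ring
  have hre := congrArg Complex.re key
  rw [@inner_self_eq_norm_sq_to_K ℂ] at hre
  rw [show ⟪J (u1 + u2 + u3), J (u1 + u2 + u3)⟫ = ((‖J (u1 + u2 + u3)‖ : ℂ)) ^ 2 from
    @inner_self_eq_norm_sq_to_K ℂ _ _ _ _ _] at hre
  rw [show ⟪J u1, J u1⟫ = ((‖J u1‖ : ℂ)) ^ 2 from @inner_self_eq_norm_sq_to_K ℂ _ _ _ _ _,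
    show ⟪J u3, J u3⟫ = ((‖J u3‖ : ℂ)) ^ 2 from @inner_self_eq_norm_sq_to_K ℂ _ _ _ _ _,
    show ⟪u3, u3⟫ = ((‖u3‖ : ℂ)) ^ 2 from @inner_self_eq_norm_sq_to_K ℂ _ _ _ _ _] at hre
  have h : ‖u1 + u2 + u3‖ ^ 2 = (⟪g, J u1⟫).re + ‖u3‖ ^ 2 +
      lam * (‖J u1 + J u2 + J u3‖ ^ 2 - ‖J u1‖ ^ 2 - ‖J u3‖ ^ 2) := by
    simpa [← Complex.ofReal_pow] using hre
  simp only [map_add]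
  nlinarith [h3n, hu1, h]

end
end

section
/- With the notation above, if λ ∉ σ_ess(A_N) ∩ σ_ess(A_D), then G_λ⁰ = ker B_λ equals E_D(λ)H + E_N(λ)H; i.e., every u ∈ G_λ with a[u,v] = λ(u,v) for all v ∈ G_λ is a sum of a Dirichlet λ-eigenvector and a Neumann λ-eigenvector. -/
noncomputable section

open scoped InnerProductSpace

local notation "⟪" x ", " y "⟫" => @inner ℂ _ _ x y

variable {H H1 : Type*} [NormedAddCommGroup H] [InnerProductSpace ℂ H] [CompleteSpace H]
  [NormedAddCommGroup H1] [InnerProductSpace ℂ H1] [CompleteSpace H1]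

open Filter Topology in
/-- Weyl (singular sequence) characterization of `λ ∈ σ_ess(A_B)`, phrased via the
bounded inverse `K = J ∘ T_B = A_B⁻¹ : H → H`:  there exists a normalized sequence
converging weakly to `0` with `‖x_n - λ K x_n‖ = ‖K (A_B - λ) x_n‖ → 0`. -/
def InEssSpec (K : H →L[ℂ] H) (lam : ℝ) : Prop :=
  ∃ x : ℕ → H, (∀ n, ‖x n‖ = 1) ∧
    (∀ y : H, Tendsto (fun n => (⟪y, x n⟫ : ℂ)) atTop (𝓝 0)) ∧
    Tendsto (fun n => ‖x n - (lam : ℂ) • K (x n)‖) atTop (𝓝 0)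


/-! With `S = I - λ T_N J`, the space `G_λ` is the orthogonal complement of `S H0` in `H¹`,
so `u ∈ ker B_λ` says that `S u` lies in the closure of `S H0`. If `λ ∉ σ_ess(A_N)`, or
`λ ∉ σ_ess(A_D)` (then use `I - λ T_D J`, the compression of `S` to `H0`), there is no orthonormal
almost-kernel sequence, since `J` would carry it to a Weyl sequence; hence `S` is bounded below
off a finite-dimensional subspace and `S H0` is closed. So `S u = S h` with `h ∈ H0`: then
`u - h ∈ ker S` is a Neumann eigenvector and `h ∈ G_λ ∩ H0` a Dirichlet one. -/

open Filter Topology NNReal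

theorem tendsto_inv_of_tendsto_mul_sq {ι : Type*} {l : Filter ι} {a : ι → ℝ} {c : ℝ}
    (ha : ∀ i, 0 ≤ a i) (h : Tendsto (fun i => c * a i ^ 2) l (𝓝 1)) :
    Tendsto (fun i => (a i)⁻¹) l (𝓝 (Real.sqrt c)) := by
  have hsq : Tendsto (fun i => (a i)⁻¹ ^ 2) l (𝓝 c) := by
    have h' := (h.inv₀ one_ne_zero).const_mul c
    rw [inv_one, mul_one] at h'
    refine h'.congr' ((h.eventually_ne one_ne_zero).mono fun i hi => ?_)
    have hai : a i ≠ 0 := fun h0 => hi (by simp [h0])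
    have hc : c ≠ 0 := fun h0 => hi (by simp [h0])
    field_simp
  simpa only [Real.sqrt_sq (inv_nonneg.mpr (ha _))] using hsq.sqrt

section Hilbert

variable {𝕜 E F : Type*} [RCLike 𝕜] [NormedAddCommGroup E] [InnerProductSpace 𝕜 E]
  [NormedAddCommGroup F] [NormedSpace 𝕜 F]

theorem Orthonormal.tendsto_inner_right_zero {v : ℕ → E} (hv : Orthonormal 𝕜 v) (y : E) :
    Tendsto (fun n => ⟪y, v n⟫_𝕜) atTop (𝓝 0) := by
  have hsq : Tendsto (fun n => ‖⟪v n, y⟫_𝕜‖ ^ 2) atTop (𝓝 0) :=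
    (hv.inner_products_summable (x := y)).tendsto_atTop_zero
  rw [tendsto_zero_iff_norm_tendsto_zero]
  simpa only [norm_inner_symm, Real.sqrt_sq (norm_nonneg _), Real.sqrt_zero] using hsq.sqrt

/-- Picking, one after the other, almost-kernel vectors orthogonal to all previous ones. -/
theorem exists_orthonormal_tendsto_apply_zero (S : E →L[𝕜] F)
    (hS : ∀ K : Submodule 𝕜 E, FiniteDimensional 𝕜 K → ∀ C : ℝ≥0, ∃ x ∈ Kᗮ, C * ‖S x‖ < ‖x‖) :
    ∃ v : ℕ → E, Orthonormal 𝕜 v ∧ Tendsto (fun n => S (v n)) atTop (𝓝 0) := by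
  have hunit : ∀ (l : List E) (n : ℕ), ∃ v ∈ (Submodule.span 𝕜 {x | x ∈ l})ᗮ,
      ‖v‖ = 1 ∧ ‖S v‖ < 1 / (n + 1) := by
    intro l n
    obtain ⟨x, hxK, hx⟩ := hS _ (FiniteDimensional.span_of_finite 𝕜 l.finite_toSet) (n + 1)
    have hx0 : 0 < ‖x‖ := lt_of_le_of_lt (by positivity) hx
    refine ⟨(‖x‖⁻¹ : 𝕜) • x, Submodule.smul_mem _ _ hxK, ?_, ?_⟩
    · rw [norm_smul, norm_inv, RCLike.norm_ofReal, abs_norm, inv_mul_cancel₀ hx0.ne']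
    · rw [map_smul, norm_smul, norm_inv, RCLike.norm_ofReal, abs_norm, inv_mul_lt_iff₀ hx0,
        mul_one_div, lt_div_iff₀ (by positivity), mul_comm]
      exact_mod_cast hx
  choose f hf_orth hf_norm hf_small using hunit
  let prev : ℕ → List E := fun n => Nat.rec [] (fun k l => f l k :: l) n
  let v : ℕ → E := fun n => f (prev n) n
  have hprev : ∀ m n, m < n → v m ∈ prev n := by
    intro m n hmn
    induction n with
    | zero => omega
    | succ k ih =>
      rcases Nat.lt_succ_iff_lt_or_eq.mp hmn with h | rfl
      · exact List.mem_cons_of_mem _ (ih h)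
      · exact List.mem_cons_self
  have horth : ∀ m n, m < n → ⟪v m, v n⟫_𝕜 = 0 := fun m n hmn =>
    (Submodule.mem_orthogonal _ _).mp (hf_orth _ _) _ (Submodule.subset_span (hprev m n hmn))
  refine ⟨v, ⟨fun n => hf_norm _ _, fun m n hmn => ?_⟩, ?_⟩
  · rcases lt_or_gt_of_ne hmn with h | h
    · exact horth m n h
    · rw [inner_eq_zero_symm]; exact horth n m h
  · rw [tendsto_zero_iff_norm_tendsto_zero]
    exact squeeze_zero (fun _ => norm_nonneg _) (fun n => (hf_small _ _).le)
      tendsto_one_div_add_atTop_nhds_zero_nat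

/-- `V` is `V ⊓ Kᗮ`, on which `T` is antilipschitz, plus a finite-dimensional subspace. -/
theorem isClosed_map_of_bound_on_orthogonal [CompleteSpace E] (T : E →L[𝕜] F)
    {V : Submodule 𝕜 E} (hV : IsClosed (V : Set E)) (K : Submodule 𝕜 E) [FiniteDimensional 𝕜 K]
    (C : ℝ≥0) (hT : ∀ x ∈ V ⊓ Kᗮ, ‖x‖ ≤ C * ‖T x‖) :
    IsClosed ((V.map (T : E →ₗ[𝕜] F) : Submodule 𝕜 F) : Set F) := by
  set V' := V ⊓ Kᗮ
  have : CompleteSpace V' := (hV.inter K.isClosed_orthogonal).completeSpace_coe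
  have : FiniteDimensional 𝕜 ↥(V'ᗮ ⊓ V) := by
    refine Module.Finite.of_injective
      ((K.orthogonalProjectionOnto : E →ₗ[𝕜] K) ∘ₗ (V'ᗮ ⊓ V).subtype) ?_
    rw [← LinearMap.ker_eq_bot, Submodule.eq_bot_iff]
    rintro ⟨w, hwV', hwV⟩ hw
    have hwK : w ∈ Kᗮ := Submodule.orthogonalProjectionOnto_eq_zero_iff.mp hw
    exact Subtype.ext ((Submodule.orthogonal_disjoint V').le_bot ⟨⟨hwV, hwK⟩, hwV'⟩)
  rw [← Submodule.sup_orthogonal_inf_of_hasOrthogonalProjection (inf_le_left : V' ≤ V),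
    Submodule.map_sup]
  refine Submodule.isClosed_sup_finiteDimensional _ _ ?_
  have hanti := (T.comp V'.subtypeL).antilipschitz_of_bound fun x => hT x x.2
  convert hanti.isClosed_range (T.comp V'.subtypeL).uniformContinuous
  ext y
  simp only [Set.mem_range, SetLike.mem_coe, Submodule.mem_map]
  exact ⟨fun ⟨x, hx, hTx⟩ => ⟨⟨x, hx⟩, hTx⟩, fun ⟨x, hTx⟩ => ⟨x, x.2, hTx⟩⟩

end Hilbert

section Defect

variable {E F : Type*} [NormedAddCommGroup E] [InnerProductSpace ℂ E]
  [NormedAddCommGroup F] [InnerProductSpace ℂ F] {J : E →L[ℂ] F} {T : F →L[ℂ] E} {lam : ℝ}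

/-- For the solution operator `T = T_B` of a boundary condition this is `A_B⁻¹ (A_B - λ)` read
in `H¹`; its kernel is `E_B(λ)H`. -/
def eigenDefect (J : E →L[ℂ] F) (T : F →L[ℂ] E) (lam : ℝ) : E →L[ℂ] E :=
  ContinuousLinearMap.id ℂ E - (lam : ℂ) • T.comp J

theorem eigenDefect_apply (u : E) : eigenDefect J T lam u = u - (lam : ℂ) • T (J u) := rfl

theorem inner_eigenDefect_left (hT : ∀ x v, ⟪T x, v⟫ = ⟪x, J v⟫) (u v : E) :
    ⟪eigenDefect J T lam u, v⟫ = ⟪u, v⟫ - lam * ⟪J u, J v⟫ := by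
  rw [eigenDefect_apply, inner_sub_left, inner_smul_left, Complex.conj_ofReal, hT]

theorem inEssSpec_of_eventually {K : F →L[ℂ] F} {x : ℕ → F} (hx : ∀ᶠ n in atTop, ‖x n‖ = 1)
    (hweak : ∀ y, Tendsto (fun n => ⟪y, x n⟫) atTop (𝓝 0))
    (hK : Tendsto (fun n => ‖x n - (lam : ℂ) • K (x n)‖) atTop (𝓝 0)) : InEssSpec K lam := by
  obtain ⟨N, hN⟩ := eventually_atTop.mp hx
  exact ⟨fun n => x (n + N), fun n => hN _ (Nat.le_add_left N n),
    fun y => (hweak y).comp (tendsto_add_atTop_nat N), hK.comp (tendsto_add_atTop_nat N)⟩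

/-- On a unit vector `⟪S v, v⟫ = 1 - λ ‖J v‖²`. -/
theorem tendsto_mul_norm_apply_sq (hT : ∀ x v, ⟪T x, v⟫ = ⟪x, J v⟫) {v : ℕ → E}
    (hv : ∀ n, ‖v n‖ = 1) (hS : Tendsto (fun n => eigenDefect J T lam (v n)) atTop (𝓝 0)) :
    Tendsto (fun n => lam * ‖J (v n)‖ ^ 2) atTop (𝓝 1) := by
  have hbound : ∀ n, |1 - lam * ‖J (v n)‖ ^ 2| ≤ ‖eigenDefect J T lam (v n)‖ := fun n => by
    have h := norm_inner_le_norm (𝕜 := ℂ) (eigenDefect J T lam (v n)) (v n)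
    have hinner : ⟪eigenDefect J T lam (v n), v n⟫ = ((1 - lam * ‖J (v n)‖ ^ 2 : ℝ) : ℂ) := by
      rw [inner_eigenDefect_left hT, inner_self_eq_norm_sq_to_K, inner_self_eq_norm_sq_to_K, hv]
      simp
    rwa [hinner, hv, mul_one, Complex.norm_real, Real.norm_eq_abs] at h
  have h0 : Tendsto (fun n => 1 - lam * ‖J (v n)‖ ^ 2) atTop (𝓝 0) :=
    squeeze_zero_norm hbound (tendsto_zero_iff_norm_tendsto_zero.mp hS)
  simpa using (tendsto_const_nhds (x := (1 : ℝ))).sub h0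

/-- A Weyl sequence of `I - λ T J` is carried by `J` to one of `J T` after normalization. -/
theorem inEssSpec_comp_of_orthonormal (hT : ∀ x v, ⟪T x, v⟫ = ⟪x, J v⟫) {v : ℕ → E}
    (hv : Orthonormal ℂ v) (hS : Tendsto (fun n => eigenDefect J T lam (v n)) atTop (𝓝 0)) :
    InEssSpec (J.comp T) lam := by
  set a : ℕ → ℝ := fun n => ‖J (v n)‖⁻¹
  have hlim := tendsto_mul_norm_apply_sq hT hv.1 hS
  have ha : Tendsto a atTop (𝓝 (Real.sqrt lam)) :=
    tendsto_inv_of_tendsto_mul_sq (fun _ => norm_nonneg _) hlim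
  have hne : ∀ᶠ n in atTop, ‖J (v n)‖ ≠ 0 :=
    (hlim.eventually_ne one_ne_zero).mono fun n hn h0 => hn (by simp [h0])
  refine inEssSpec_of_eventually (x := fun n => (a n : ℂ) • J (v n)) ?_ (fun y => ?_) ?_
  · filter_upwards [hne] with n hn
    rw [norm_smul, Complex.norm_real, Real.norm_eq_abs, abs_inv, abs_norm, inv_mul_cancel₀ hn]
  · have h := ((Complex.continuous_ofReal.tendsto _).comp ha).mul
      (hv.tendsto_inner_right_zero (T y))
    rw [mul_zero] at h
    refine h.congr fun n => ?_
    simp only [Function.comp_apply, inner_smul_right, hT]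
  · have h := ha.mul ((J.continuous.tendsto 0).comp hS).norm
    rw [map_zero, norm_zero, mul_zero] at h
    refine h.congr fun n => ?_
    simp only [Function.comp_apply, eigenDefect_apply, ContinuousLinearMap.comp_apply, map_sub,
      map_smul, a]
    rw [smul_comm (lam : ℂ), ← smul_sub, norm_smul, Complex.norm_real, Real.norm_eq_abs, abs_inv,
      abs_norm]

end Defect

section Boundary

variable {E F : Type*} [NormedAddCommGroup E] [InnerProductSpace ℂ E]
  [NormedAddCommGroup F] [InnerProductSpace ℂ F] {J : E →L[ℂ] F} {lam : ℝ}

theorem exists_bound_on_orthogonal_of_not_inEssSpec {T : F →L[ℂ] E}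
    (hT : ∀ x v, ⟪T x, v⟫ = ⟪x, J v⟫) (hlam : ¬ InEssSpec (J.comp T) lam) :
    ∃ K : Submodule ℂ E, FiniteDimensional ℂ K ∧
      ∃ C : ℝ≥0, ∀ x ∈ Kᗮ, ‖x‖ ≤ C * ‖eigenDefect J T lam x‖ := by
  by_contra hK
  push Not at hK
  obtain ⟨v, hv, hSv⟩ := exists_orthonormal_tendsto_apply_zero _ hK
  exact hlam (inEssSpec_comp_of_orthonormal hT hv hSv)

variable {H0 : Submodule ℂ E} [CompleteSpace H0] {TN TD : F →L[ℂ] E}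

theorem starProjection_neumann_apply (hTN : ∀ x v, ⟪TN x, v⟫ = ⟪x, J v⟫)
    (hTDmem : ∀ x, TD x ∈ H0) (hTD : ∀ x, ∀ v ∈ H0, ⟪TD x, v⟫ = ⟪x, J v⟫) (x : F) :
    H0.starProjection (TN x) = TD x :=
  Submodule.eq_starProjection_of_mem_of_inner_eq_zero (hTDmem x) fun w hw => by
    rw [inner_sub_left, hTN, hTD x w hw, sub_self]

theorem inner_dirichlet_eq_inner_comp_starProjection (hTDmem : ∀ x, TD x ∈ H0)
    (hTD : ∀ x, ∀ v ∈ H0, ⟪TD x, v⟫ = ⟪x, J v⟫) (x : F) (v : E) :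
    ⟪TD x, v⟫ = ⟪x, (J.comp H0.starProjection) v⟫ := by
  rw [ContinuousLinearMap.comp_apply, ← hTD x _ (H0.starProjection_apply_mem v),
    ← Submodule.inner_starProjection_left_eq_right, Submodule.starProjection_eq_self_iff.mpr
      (hTDmem x)]

theorem norm_eigenDefect_dirichlet_le (hTN : ∀ x v, ⟪TN x, v⟫ = ⟪x, J v⟫)
    (hTDmem : ∀ x, TD x ∈ H0) (hTD : ∀ x, ∀ v ∈ H0, ⟪TD x, v⟫ = ⟪x, J v⟫) {x : E} (hx : x ∈ H0) :
    ‖eigenDefect (J.comp H0.starProjection) TD lam x‖ ≤ ‖eigenDefect J TN lam x‖ := by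
  have hP : H0.starProjection (eigenDefect J TN lam x) =
      eigenDefect (J.comp H0.starProjection) TD lam x := by
    rw [eigenDefect_apply, eigenDefect_apply, map_sub, map_smul,
      starProjection_neumann_apply hTN hTDmem hTD, ContinuousLinearMap.comp_apply,
      Submodule.starProjection_eq_self_iff.mpr hx]
  exact hP ▸ H0.norm_starProjection_apply_le _

/-- For `D` the bound transfers because `I - λ T_D J` is the compression of `I - λ T_N J`
to `H0`. -/
theorem isClosed_map_eigenDefect [CompleteSpace E] (hTN : ∀ x v, ⟪TN x, v⟫ = ⟪x, J v⟫)
    (hTDmem : ∀ x, TD x ∈ H0) (hTD : ∀ x, ∀ v ∈ H0, ⟪TD x, v⟫ = ⟪x, J v⟫)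
    (hlam : ¬ (InEssSpec (J.comp TN) lam ∧ InEssSpec (J.comp TD) lam)) :
    IsClosed ((H0.map (eigenDefect J TN lam : E →ₗ[ℂ] E) : Submodule ℂ E) : Set E) := by
  have hH0 : IsClosed (H0 : Set E) := (completeSpace_coe_iff_isComplete.mp ‹_›).isClosed
  rcases not_and_or.mp hlam with hN | hD
  · obtain ⟨K, _, C, hK⟩ := exists_bound_on_orthogonal_of_not_inEssSpec hTN hN
    exact isClosed_map_of_bound_on_orthogonal _ hH0 K C fun x hx => hK x hx.2
  · have hcomp : (J.comp H0.starProjection).comp TD = J.comp TD := by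
      ext x
      simp [Submodule.starProjection_eq_self_iff.mpr (hTDmem x)]
    obtain ⟨K, _, C, hK⟩ := exists_bound_on_orthogonal_of_not_inEssSpec
      (inner_dirichlet_eq_inner_comp_starProjection hTDmem hTD) (hcomp ▸ hD)
    refine isClosed_map_of_bound_on_orthogonal _ hH0 K C fun x hx => (hK x hx.2).trans ?_
    gcongr
    exact norm_eigenDefect_dirichlet_le hTN hTDmem hTD hx.1

end Boundary

section Eigen

variable {E F : Type*} [NormedAddCommGroup E] [InnerProductSpace ℂ E]
  [NormedAddCommGroup F] [InnerProductSpace ℂ F] {J : E →L[ℂ] F} {H0 : Submodule ℂ E} {lam : ℝ}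

theorem memA_smul_iff_mem_orthogonal_map {TN : F →L[ℂ] E} (hTN : ∀ x v, ⟪TN x, v⟫ = ⟪x, J v⟫)
    (z : E) : MemA J H0 z ((lam : ℂ) • J z) ↔
      z ∈ (H0.map (eigenDefect J TN lam : E →ₗ[ℂ] E))ᗮ := by
  have hconj : ∀ v,
      ⟪eigenDefect J TN lam v, z⟫ = starRingEnd ℂ (⟪z, v⟫ - ⟪(lam : ℂ) • J z, J v⟫) := fun v => by
    rw [inner_eigenDefect_left hTN, inner_smul_left, map_sub, map_mul, inner_conj_symm,
      inner_conj_symm, Complex.conj_conj]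
  rw [Submodule.mem_orthogonal]
  constructor
  · rintro hA _ ⟨v, hv, rfl⟩
    rw [ContinuousLinearMap.coe_coe, hconj, hA v hv, sub_self, map_zero]
  · intro h v hv
    have hv' := h _ (Submodule.mem_map_of_mem hv)
    rwa [ContinuousLinearMap.coe_coe, hconj, map_eq_zero, sub_eq_zero] at hv'

theorem memA_smul_of_eq_smul {T : F →L[ℂ] E} (hT : ∀ x, ∀ v ∈ H0, ⟪T x, v⟫ = ⟪x, J v⟫) {u : E}
    (hu : u = (lam : ℂ) • T (J u)) : MemA J H0 u ((lam : ℂ) • J u) := fun v hv => by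
  conv_lhs => rw [hu]
  rw [inner_smul_left, inner_smul_left, hT _ v hv]

theorem eq_smul_dirichlet_of_memA {TD : F →L[ℂ] E} (hTDmem : ∀ x, TD x ∈ H0)
    (hTD : ∀ x, ∀ v ∈ H0, ⟪TD x, v⟫ = ⟪x, J v⟫) {u : E} (hu : u ∈ H0)
    (hA : MemA J H0 u ((lam : ℂ) • J u)) : u = (lam : ℂ) • TD (J u) := by
  set d := u - (lam : ℂ) • TD (J u)
  have hd : d ∈ H0 := H0.sub_mem hu (H0.smul_mem _ (hTDmem _))
  have hdd : ⟪d, d⟫ = 0 := by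
    rw [inner_sub_left, hA d hd, inner_smul_left, inner_smul_left, hTD _ d hd, sub_self]
  exact sub_eq_zero.mp (inner_self_eq_zero.mp hdd)

end Eigen

theorem stmt12_general
    (J : H1 →L[ℂ] H)
    (H0 : Submodule ℂ H1) [CompleteSpace H0]
    (TN : H →L[ℂ] H1) (hTN : ∀ (u : H) (v : H1), ⟪TN u, v⟫ = ⟪u, J v⟫)
    (TD : H →L[ℂ] H1) (hTDmem : ∀ u : H, TD u ∈ H0)
    (hTD : ∀ (u : H), ∀ v ∈ H0, ⟪TD u, (v : H1)⟫ = ⟪u, J v⟫)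
    (lam : ℝ)
    (hess : ¬ (InEssSpec (J.comp TN) lam ∧ InEssSpec (J.comp TD) lam)) :
    ∀ u : H1,
      (MemA J H0 u ((lam : ℂ) • J u) ∧
        ∀ v : H1, MemA J H0 v ((lam : ℂ) • J v) →
          ⟪u, v⟫ = (lam : ℂ) * ⟪J u, J v⟫) ↔
      (∃ u1 u2 : H1, u1 = (lam : ℂ) • TN (J u1) ∧ u2 = (lam : ℂ) • TD (J u2) ∧
        u = u1 + u2) := by
  intro u
  set S := eigenDefect J TN lam
  have hG := memA_smul_iff_mem_orthogonal_map (H0 := H0) (lam := lam) hTN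
  have hNeumann : ∀ w, w = (lam : ℂ) • TN (J w) → MemA J H0 w ((lam : ℂ) • J w) :=
    fun w => memA_smul_of_eq_smul fun x v _ => hTN x v
  constructor
  · rintro ⟨hu, hperp⟩
    -- `u ∈ ker B_λ` says `S u ⊥ G_λ`, and `G_λᗮ` is the closure of `S H0`
    have hSu : S u ∈ (H0.map (S : H1 →ₗ[ℂ] H1))ᗮᗮ := fun z hz => by
      rw [inner_eq_zero_symm, inner_eigenDefect_left hTN, hperp z ((hG z).2 hz), sub_self]
    rw [Submodule.orthogonal_orthogonal_eq_closure,
      (isClosed_map_eigenDefect hTN hTDmem hTD hess).submodule_topologicalClosure_eq] at hSu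
    obtain ⟨h0, hh0, hSh0⟩ := hSu
    have hN : u - h0 = (lam : ℂ) • TN (J (u - h0)) := by
      rw [← sub_eq_zero, ← eigenDefect_apply, map_sub, ← hSh0]
      exact sub_self _
    have hD : MemA J H0 h0 ((lam : ℂ) • J h0) := by
      rw [hG, ← sub_sub_cancel u h0]
      exact sub_mem ((hG u).1 hu) ((hG _).1 (hNeumann _ hN))
    exact ⟨u - h0, h0, hN, eq_smul_dirichlet_of_memA hTDmem hTD hh0 hD, (sub_add_cancel u h0).symm⟩
  · rintro ⟨u1, u2, h1, h2, rfl⟩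
    have hu2 : u2 ∈ H0 := h2 ▸ H0.smul_mem _ (hTDmem _)
    have hu : u1 + u2 ∈ (H0.map (S : H1 →ₗ[ℂ] H1))ᗮ :=
      add_mem ((hG _).1 (hNeumann _ h1)) ((hG _).1 (memA_smul_of_eq_smul hTD h2))
    refine ⟨(hG _).2 hu, fun v hv => ?_⟩
    have hS1 : S u1 = 0 := by rw [eigenDefect_apply, ← h1, sub_self]
    have hSv : ⟪S (u1 + u2), v⟫ = 0 := by
      rw [map_add, hS1, zero_add]
      exact (hG v).1 hv _ (Submodule.mem_map_of_mem hu2)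
    rwa [inner_eigenDefect_left hTN, sub_eq_zero] at hSv

theorem stmt12
    (J : H1 →L[ℂ] H) (hJinj : Function.Injective J) (hJdense : DenseRange J)
    (H0 : Submodule ℂ H1) [CompleteSpace H0]
    (hH0dense : DenseRange (fun v : H0 => J v))
    (TN : H →L[ℂ] H1) (hTN : ∀ (u : H) (v : H1), ⟪TN u, v⟫ = ⟪u, J v⟫)
    (TD : H →L[ℂ] H1) (hTDmem : ∀ u : H, TD u ∈ H0)
    (hTD : ∀ (u : H), ∀ v ∈ H0, ⟪TD u, (v : H1)⟫ = ⟪u, J v⟫)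
    (lam : ℝ)
    (hess : ¬ (InEssSpec (J.comp TN) lam ∧ InEssSpec (J.comp TD) lam)) :
    ∀ u : H1,
      (MemA J H0 u ((lam : ℂ) • J u) ∧
        ∀ v : H1, MemA J H0 v ((lam : ℂ) • J v) →
          ⟪u, v⟫ = (lam : ℂ) * ⟪J u, J v⟫) ↔
      (∃ u1 u2 : H1, u1 = (lam : ℂ) • TN (J u1) ∧ u2 = (lam : ℂ) • TD (J u2) ∧
        u = u1 + u2) :=
  stmt12_general J H0 TN hTN TD hTDmem hTD lam hess
end
end

section
/- With the notation above, if λ ∉ σ(A_N) ∪ σ(A_D), then R'(λ) := (A_N − λI)⁻¹ − (A_D − λI)⁻¹ maps H into G_λ, its range is dense in G_λ with respect to the a-norm, and a[B_λ R'(λ)u, R'(λ)v] = (u, R'(λ)v) for all u, v ∈ H. Moreover B_λ R'(λ) = Π'_λ A_N⁻¹ and R'(λ) = B_λ⁻¹ Π'_λ A_N⁻¹. -/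
noncomputable section

open scoped InnerProductSpace

local notation "⟪" x ", " y "⟫" => @inner ℂ _ _ x y

variable {H H1 : Type*} [NormedAddCommGroup H] [InnerProductSpace ℂ H] [CompleteSpace H]
  [NormedAddCommGroup H1] [InnerProductSpace ℂ H1] [CompleteSpace H1]

/-!
Put `L = 1 - λ A_N⁻¹ J` on `H¹`. It is `a`-symmetric, and bijective because `λ ∉ σ(A_N)`. The space
`G_λ` consists of the `u` with `a[L u, v] = 0` for all `v ∈ H¹₀`, and `B_λ` is the compression
`Π'_λ L` of `L` to `G_λ`. Since `λ ∉ σ(A_D)`, the compression of `L` to `H¹₀` is onto, so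
`H¹ = H¹₀ + G_λ`; with the bijectivity of `L` this makes `B_λ` bijective. From `L R_N = A_N⁻¹` and
`L (R_D u) ⊥ G_λ` (as `R_D u ∈ H¹₀`) we get `B_λ R'(λ) = Π'_λ A_N⁻¹`, i.e.
`a[B_λ R'(λ) u, z] = (u, z)` for `z ∈ G_λ`. If `B_λ b ∈ G_λ` is `a`-orthogonal to the range of
`R'(λ)`, symmetry of `B_λ` gives `(u, b) = 0` for all `u`, so `b = 0`: the range is dense.
-/

namespace ContinuousLinearMap

section Compression

variable {𝕜 E : Type*} [RCLike 𝕜] [NormedAddCommGroup E] [InnerProductSpace 𝕜 E]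

def compression (L : E →L[𝕜] E) (G : Submodule 𝕜 E) [G.HasOrthogonalProjection] : G →L[𝕜] G :=
  G.orthogonalProjectionOnto ∘L L ∘L G.subtypeL

variable {L : E →L[𝕜] E} {G K : Submodule 𝕜 E}

lemma apply_mem_orthogonal_of_mem (hG : ∀ z, z ∈ G ↔ L z ∈ Kᗮ)
    (hL : (L : E →ₗ[𝕜] E).IsSymmetric) {u : E} (hu : u ∈ K) : L u ∈ Gᗮ := fun z hz => by
  rw [← coe_coe, ← hL, coe_coe]
  exact Submodule.inner_left_of_mem_orthogonal hu ((hG z).mp hz)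

lemma sup_eq_top_of_forall_exists_sub_mem_orthogonal [K.HasOrthogonalProjection]
    (hG : ∀ z, z ∈ G ↔ L z ∈ Kᗮ) (hK : ∀ p ∈ K, ∃ u ∈ K, L u - p ∈ Kᗮ) : K ⊔ G = ⊤ := by
  refine Submodule.eq_top_iff'.mpr fun x => Submodule.mem_sup.mpr ?_
  obtain ⟨u, hu, hLu⟩ := hK _ (K.orthogonalProjectionOnto (L x)).2
  refine ⟨u, hu, x - u, (hG _).mpr ?_, add_sub_cancel _ _⟩
  have hLx := K.sub_starProjection_mem_orthogonal (L x)
  rw [Submodule.starProjection_apply] at hLx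
  simpa only [map_sub, sub_sub_sub_cancel_right] using sub_mem hLx hLu

variable [G.HasOrthogonalProjection]

lemma compression_apply (x : G) : L.compression G x = G.orthogonalProjectionOnto (L x) := rfl

lemma id_sub_smul_compression (c : 𝕜) (S : E →L[𝕜] E) :
    (ContinuousLinearMap.id 𝕜 E - c • S).compression G =
      ContinuousLinearMap.id 𝕜 G - c • (G.orthogonalProjectionOnto ∘L S ∘L G.subtypeL) := by
  ext x
  simp [compression_apply, Submodule.orthogonalProjectionOnto_mem_subspace_eq_self]

lemma inner_compression_left (x y : G) : ⟪(L.compression G x : E), y⟫_𝕜 = ⟪L x, y⟫_𝕜 :=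
  Submodule.inner_orthogonalProjectionOnto_eq_of_mem_right y (L x)

lemma compression_eq_of_sub_mem_orthogonal {x : G} {w : E} (h : L x - w ∈ Gᗮ) :
    L.compression G x = G.orthogonalProjectionOnto w := by
  rwa [compression_apply, ← sub_eq_zero, ← map_sub, Submodule.orthogonalProjectionOnto_eq_zero_iff]

lemma isSymmetric_compression (hL : (L : E →ₗ[𝕜] E).IsSymmetric) :
    (L.compression G : G →ₗ[𝕜] G).IsSymmetric := fun x y => by
  rw [coe_coe, Submodule.coe_inner, inner_compression_left, compression_apply,
    Submodule.inner_orthogonalProjectionOnto_eq_of_mem_left]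
  exact hL x y

lemma compression_injective (hG : ∀ z, z ∈ G ↔ L z ∈ Kᗮ) (hL : Function.Injective L)
    (hKG : K ⊔ G = ⊤) : Function.Injective (L.compression G) := by
  refine (injective_iff_map_eq_zero _).mpr fun w hw => ?_
  rw [compression_apply, Submodule.orthogonalProjectionOnto_eq_zero_iff] at hw
  have hLw : L w ∈ (K ⊔ G)ᗮ := by
    rw [← Submodule.inf_orthogonal]
    exact ⟨(hG w).mp w.2, hw⟩
  rw [hKG, Submodule.top_orthogonal_eq_bot, Submodule.mem_bot, ← map_zero L] at hLw
  exact Subtype.ext (hL hLw)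

lemma compression_surjective (hG : ∀ z, z ∈ G ↔ L z ∈ Kᗮ) (hLs : (L : E →ₗ[𝕜] E).IsSymmetric)
    (hL : Function.Surjective L) (hKG : K ⊔ G = ⊤) : Function.Surjective (L.compression G) := by
  intro g
  obtain ⟨x, hx⟩ := hL g
  obtain ⟨u, hu, w, hw, rfl⟩ := Submodule.mem_sup.mp (hKG.symm ▸ Submodule.mem_top (x := x))
  refine ⟨⟨w, hw⟩, ?_⟩
  have hLw : L w - g ∈ Gᗮ := by
    simpa [← hx] using neg_mem (apply_mem_orthogonal_of_mem hG hLs hu)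
  rw [compression_eq_of_sub_mem_orthogonal hLw,
    Submodule.orthogonalProjectionOnto_mem_subspace_eq_self]

end Compression

end ContinuousLinearMap

lemma LinearMap.closure_range_eq_of_forall_inner_eq_zero {𝕜 E F : Type*} [RCLike 𝕜]
    [NormedAddCommGroup E] [InnerProductSpace 𝕜 E] [CompleteSpace E] [AddCommGroup F] [Module 𝕜 F]
    {G : Submodule 𝕜 E} (hG : IsClosed (G : Set E)) (R : F →ₗ[𝕜] E) (hR : ∀ u, R u ∈ G)
    (h : ∀ y ∈ G, (∀ u, ⟪R u, y⟫_𝕜 = 0) → y = 0) : closure (Set.range R) = G := by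
  set C := (LinearMap.range R).topologicalClosure
  have hCG : C ≤ G :=
    Submodule.topologicalClosure_minimal _ (by rintro _ ⟨u, rfl⟩; exact hR u) hG
  have hCG_perp : Cᗮ ⊓ G = ⊥ := by
    refine (Submodule.eq_bot_iff _).mpr fun y ⟨hyC, hyG⟩ => h y hyG fun u => ?_
    rw [Submodule.orthogonal_closure] at hyC
    exact hyC _ ⟨u, rfl⟩
  have : CompleteSpace C := (Submodule.isClosed_topologicalClosure _).completeSpace_coe
  rw [← LinearMap.coe_range, ← Submodule.topologicalClosure_coe,
    ← Submodule.sup_orthogonal_inf_of_hasOrthogonalProjection hCG, hCG_perp, sup_bot_eq]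

lemma LinearMap.IsSymmetric.eq_zero_of_forall_inner_eq_zero {𝕜 G F : Type*} [RCLike 𝕜]
    [NormedAddCommGroup G] [InnerProductSpace 𝕜 G] [NormedAddCommGroup F] [InnerProductSpace 𝕜 F]
    {B : G →ₗ[𝕜] G} (hB : B.IsSymmetric) (hBs : Function.Surjective B) {J : G →ₗ[𝕜] F}
    (hJ : Function.Injective J) {R : F → G} (hR : ∀ u z, ⟪B (R u), z⟫_𝕜 = ⟪u, J z⟫_𝕜) {y : G}
    (hy : ∀ u, ⟪R u, y⟫_𝕜 = 0) : y = 0 := by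
  obtain ⟨b, rfl⟩ := hBs y
  have hJb : J b = 0 := inner_self_eq_zero.mp (by rw [← hR, hB, hy])
  rw [(injective_iff_map_eq_zero J).mp hJ b hJb, map_zero]

section Resolvent

open ContinuousLinearMap

variable {𝕜 E F : Type*} [NontriviallyNormedField 𝕜] [NormedAddCommGroup E] [NormedSpace 𝕜 E]
  [NormedAddCommGroup F] [NormedSpace 𝕜 F] {T : F →L[𝕜] E} {J : E →L[𝕜] F} {c : 𝕜}
  {R : F →L[𝕜] E}

lemma id_sub_smul_comp_apply_eq_iff (hR : ∀ f u, R f = u ↔ T (f + c • J u) = u) (f : F) (u : E) :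
    (ContinuousLinearMap.id 𝕜 E - c • T ∘L J) u = T f ↔ R f = u := by
  rw [hR, map_add, map_smul, sub_apply, smul_apply, comp_apply, id_apply, sub_eq_iff_eq_add,
    eq_comm]

lemma id_sub_smul_comp_apply_resolvent (hR : ∀ f u, R f = u ↔ T (f + c • J u) = u) (f : F) :
    (ContinuousLinearMap.id 𝕜 E - c • T ∘L J) (R f) = T f :=
  (id_sub_smul_comp_apply_eq_iff hR f (R f)).mpr rfl

lemma bijective_id_sub_smul_comp (hR : ∀ f u, R f = u ↔ T (f + c • J u) = u) :
    Function.Bijective (ContinuousLinearMap.id 𝕜 E - c • T ∘L J) := by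
  refine ⟨(injective_iff_map_eq_zero _).mpr fun u hu => ?_, fun g => ⟨g + c • R (J g), ?_⟩⟩
  · rw [← map_zero T, id_sub_smul_comp_apply_eq_iff hR] at hu
    rw [← hu, map_zero]
  · rw [map_add, map_smul, id_sub_smul_comp_apply_resolvent hR]
    simp

end Resolvent

section NeumannDirichlet

open ContinuousLinearMap

variable {𝕜 E F : Type*} [RCLike 𝕜] [NormedAddCommGroup E] [InnerProductSpace 𝕜 E]
  [NormedAddCommGroup F] [InnerProductSpace 𝕜 F] {J : E →L[𝕜] F} {c : 𝕜}

lemma inner_id_sub_smul_comp_apply_left {T : F →L[𝕜] E} {v : E}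
    (hT : ∀ u, ⟪T u, v⟫_𝕜 = ⟪u, J v⟫_𝕜) (x : E) :
    ⟪(ContinuousLinearMap.id 𝕜 E - c • T ∘L J) x, v⟫_𝕜 =
      ⟪x, v⟫_𝕜 - starRingEnd 𝕜 c * ⟪J x, J v⟫_𝕜 := by
  rw [sub_apply, id_apply, inner_sub_left, smul_apply, inner_smul_left, comp_apply, hT]

lemma isSymmetric_id_sub_smul_comp {T : F →L[𝕜] E} (hT : ∀ u v, ⟪T u, v⟫_𝕜 = ⟪u, J v⟫_𝕜)
    (hc : starRingEnd 𝕜 c = c) :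
    ((ContinuousLinearMap.id 𝕜 E - c • T ∘L J : E →L[𝕜] E) : E →ₗ[𝕜] E).IsSymmetric := by
  intro x y
  rw [coe_coe, inner_id_sub_smul_comp_apply_left (hT · y)]
  conv_rhs => rw [← inner_conj_symm, inner_id_sub_smul_comp_apply_left (hT · x)]
  simp only [map_sub, map_mul, hc, inner_conj_symm]

variable {K G : Submodule 𝕜 E} {TN TD RN RD : F →L[𝕜] E}

lemma exists_mem_id_sub_smul_comp_sub_mem_orthogonal (hTN : ∀ u v, ⟪TN u, v⟫_𝕜 = ⟪u, J v⟫_𝕜)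
    (hTDmem : ∀ u, TD u ∈ K) (hTD : ∀ u, ∀ v ∈ K, ⟪TD u, v⟫_𝕜 = ⟪u, J v⟫_𝕜)
    (hRD : ∀ f u, RD f = u ↔ TD (f + c • J u) = u) (p : E) (hp : p ∈ K) :
    ∃ u ∈ K, (ContinuousLinearMap.id 𝕜 E - c • TN ∘L J) u - p ∈ Kᗮ := by
  -- tested against `K`, `1 - c TN J` agrees with `1 - c TD J`, which is onto and preserves `K`
  obtain ⟨u, hu⟩ := (bijective_id_sub_smul_comp hRD).2 p
  refine ⟨u, ?_, (Submodule.mem_orthogonal' _ _).mpr fun v hv => ?_⟩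
  · have hu' : u = p + c • TD (J u) := by rw [← hu]; simp
    rw [hu']
    exact add_mem hp (K.smul_mem c (hTDmem _))
  · rw [inner_sub_left, inner_id_sub_smul_comp_apply_left (hTN · v),
      ← inner_id_sub_smul_comp_apply_left (hTD · v hv), hu, sub_self]

lemma resolvent_sub_resolvent_mem
    (hG : ∀ z, z ∈ G ↔ (ContinuousLinearMap.id 𝕜 E - c • TN ∘L J) z ∈ Kᗮ)
    (hTN : ∀ u v, ⟪TN u, v⟫_𝕜 = ⟪u, J v⟫_𝕜) (hTD : ∀ u, ∀ v ∈ K, ⟪TD u, v⟫_𝕜 = ⟪u, J v⟫_𝕜)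
    (hRN : ∀ f u, RN f = u ↔ TN (f + c • J u) = u) (hRD : ∀ f u, RD f = u ↔ TD (f + c • J u) = u)
    (f : F) : RN f - RD f ∈ G := by
  refine (hG _).mpr <| (Submodule.mem_orthogonal' _ _).mpr fun v hv => ?_
  rw [map_sub, id_sub_smul_comp_apply_resolvent hRN, inner_sub_left, hTN,
    inner_id_sub_smul_comp_apply_left (hTN · v), ← inner_id_sub_smul_comp_apply_left (hTD · v hv),
    id_sub_smul_comp_apply_resolvent hRD, hTD _ _ hv, sub_self]

variable [G.HasOrthogonalProjection]

lemma compression_resolvent_sub_resolvent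
    (hG : ∀ z, z ∈ G ↔ (ContinuousLinearMap.id 𝕜 E - c • TN ∘L J) z ∈ Kᗮ)
    (hTN : ∀ u v, ⟪TN u, v⟫_𝕜 = ⟪u, J v⟫_𝕜) (hTDmem : ∀ u, TD u ∈ K)
    (hRN : ∀ f u, RN f = u ↔ TN (f + c • J u) = u) (hRD : ∀ f u, RD f = u ↔ TD (f + c • J u) = u)
    (hc : starRingEnd 𝕜 c = c) {f : F} (hf : RN f - RD f ∈ G) :
    (ContinuousLinearMap.id 𝕜 E - c • TN ∘L J).compression G ⟨_, hf⟩ =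
      G.orthogonalProjectionOnto (TN f) := by
  refine compression_eq_of_sub_mem_orthogonal ?_
  rw [map_sub, id_sub_smul_comp_apply_resolvent hRN, sub_sub_cancel_left]
  exact neg_mem (apply_mem_orthogonal_of_mem hG (isSymmetric_id_sub_smul_comp hTN hc)
    ((hRD _ _).mp rfl ▸ hTDmem _))

lemma inner_compression_resolvent_sub_resolvent
    (hG : ∀ z, z ∈ G ↔ (ContinuousLinearMap.id 𝕜 E - c • TN ∘L J) z ∈ Kᗮ)
    (hTN : ∀ u v, ⟪TN u, v⟫_𝕜 = ⟪u, J v⟫_𝕜) (hTDmem : ∀ u, TD u ∈ K)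
    (hRN : ∀ f u, RN f = u ↔ TN (f + c • J u) = u) (hRD : ∀ f u, RD f = u ↔ TD (f + c • J u) = u)
    (hc : starRingEnd 𝕜 c = c) {f : F} (hf : RN f - RD f ∈ G) (z : G) :
    ⟪((ContinuousLinearMap.id 𝕜 E - c • TN ∘L J).compression G ⟨_, hf⟩ : E), z⟫_𝕜 =
      ⟪f, J z⟫_𝕜 := by
  rw [compression_resolvent_sub_resolvent hG hTN hTDmem hRN hRD hc hf]
  exact (Submodule.inner_orthogonalProjectionOnto_eq_of_mem_right z (TN f)).trans (hTN f z)

lemma bijective_compression_id_sub_smul_comp [K.HasOrthogonalProjection]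
    (hG : ∀ z, z ∈ G ↔ (ContinuousLinearMap.id 𝕜 E - c • TN ∘L J) z ∈ Kᗮ)
    (hTN : ∀ u v, ⟪TN u, v⟫_𝕜 = ⟪u, J v⟫_𝕜) (hTDmem : ∀ u, TD u ∈ K)
    (hTD : ∀ u, ∀ v ∈ K, ⟪TD u, v⟫_𝕜 = ⟪u, J v⟫_𝕜)
    (hRN : ∀ f u, RN f = u ↔ TN (f + c • J u) = u) (hRD : ∀ f u, RD f = u ↔ TD (f + c • J u) = u)
    (hc : starRingEnd 𝕜 c = c) :
    Function.Bijective ((ContinuousLinearMap.id 𝕜 E - c • TN ∘L J).compression G) := by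
  have hKG := sup_eq_top_of_forall_exists_sub_mem_orthogonal hG
    (exists_mem_id_sub_smul_comp_sub_mem_orthogonal hTN hTDmem hTD hRD)
  have hL := bijective_id_sub_smul_comp hRN
  exact ⟨compression_injective hG hL.1 hKG,
    compression_surjective hG (isSymmetric_id_sub_smul_comp hTN hc) hL.2 hKG⟩

end NeumannDirichlet

lemma memA_smul_iff {E F : Type*} [NormedAddCommGroup E] [InnerProductSpace ℂ E]
    [NormedAddCommGroup F] [InnerProductSpace ℂ F] {J : E →L[ℂ] F} {H0 : Submodule ℂ E}
    {T : F →L[ℂ] E} (hT : ∀ u v, ⟪T u, v⟫ = ⟪u, J v⟫) {c : ℂ} (hc : starRingEnd ℂ c = c) (u : E) :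
    MemA J H0 u (c • J u) ↔ (ContinuousLinearMap.id ℂ E - c • T ∘L J) u ∈ H0ᗮ := by
  rw [Submodule.mem_orthogonal']
  refine forall₂_congr fun v _ => ?_
  rw [inner_id_sub_smul_comp_apply_left (hT · v), inner_smul_left, hc, sub_eq_zero]

theorem stmt15_general
    (J : H1 →L[ℂ] H) (hJinj : Function.Injective J)
    (H0 : Submodule ℂ H1) [CompleteSpace H0]
    (TN : H →L[ℂ] H1) (hTN : ∀ (u : H) (v : H1), ⟪TN u, v⟫ = ⟪u, J v⟫)
    (TD : H →L[ℂ] H1) (hTDmem : ∀ u : H, TD u ∈ H0)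
    (hTD : ∀ (u : H), ∀ v ∈ H0, ⟪TD u, (v : H1)⟫ = ⟪u, J v⟫)
    (lam : ℝ)
    (RN : H →L[ℂ] H1)
    (hRN : ∀ (f : H) (u : H1), RN f = u ↔ TN (f + (lam : ℂ) • J u) = u)
    (RD : H →L[ℂ] H1)
    (hRD : ∀ (f : H) (u : H1), RD f = u ↔ TD (f + (lam : ℂ) • J u) = u)
    (Gl : Submodule ℂ H1) [CompleteSpace Gl]
    (hGl : ∀ u : H1, u ∈ Gl ↔ MemA J H0 u ((lam : ℂ) • J u))
    (Bl : Gl →L[ℂ] Gl)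
    (hBl : Bl = ContinuousLinearMap.id ℂ Gl -
      (lam : ℂ) • (Gl.orthogonalProjectionOnto.comp ((TN.comp J).comp Gl.subtypeL))) :
    ∃ hm : ∀ u : H, RN u - RD u ∈ Gl,
      -- the range of `R'(λ)` is dense in `G_λ` w.r.t. the `a`-norm
      closure (Set.range fun u : H => RN u - RD u) = (Gl : Set H1) ∧
      -- `a[B_λ R'(λ)u, R'(λ)v] = (u, R'(λ)v)`
      (∀ u v : H, ⟪((Bl ⟨RN u - RD u, hm u⟩ : Gl) : H1), RN v - RD v⟫
          = ⟪u, J (RN v - RD v)⟫) ∧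
      -- `B_λ R'(λ) = Π'_λ A_N⁻¹`
      (∀ u : H, Bl ⟨RN u - RD u, hm u⟩ = Gl.orthogonalProjectionOnto (TN u)) ∧
      -- `B_λ` is invertible, so `R'(λ) = B_λ⁻¹ Π'_λ A_N⁻¹`
      Function.Bijective Bl := by
  have hc : starRingEnd ℂ (lam : ℂ) = lam := Complex.conj_ofReal lam
  have hG (u : H1) := (hGl u).trans (memA_smul_iff hTN hc u)
  obtain rfl : Bl = (ContinuousLinearMap.id ℂ H1 - (lam : ℂ) • TN ∘L J).compression Gl := by
    rw [hBl, ContinuousLinearMap.id_sub_smul_compression]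
  have hm := resolvent_sub_resolvent_mem hG hTN hTD hRN hRD
  have hform (u : H) := inner_compression_resolvent_sub_resolvent hG hTN hTDmem hRN hRD hc (hm u)
  have hB := bijective_compression_id_sub_smul_comp hG hTN hTDmem hTD hRN hRD hc
  refine ⟨hm, ?_, fun u v => hform u ⟨_, hm v⟩,
    fun u => compression_resolvent_sub_resolvent hG hTN hTDmem hRN hRD hc (hm u), hB⟩
  refine LinearMap.closure_range_eq_of_forall_inner_eq_zero
    (completeSpace_coe_iff_isComplete.mp ‹_›).isClosed ((RN - RD : H →L[ℂ] H1) : H →ₗ[ℂ] H1) hm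
    fun y hy hperp => congrArg Subtype.val <|
      (ContinuousLinearMap.isSymmetric_compression (isSymmetric_id_sub_smul_comp hTN hc)
        ).eq_zero_of_forall_inner_eq_zero hB.2 (J := (J : H1 →ₗ[ℂ] H) ∘ₗ Gl.subtype)
        (hJinj.comp Subtype.val_injective) (R := fun u => ⟨_, hm u⟩) hform
        (y := ⟨y, hy⟩) hperp

theorem stmt15
    (J : H1 →L[ℂ] H) (hJinj : Function.Injective J) (hJdense : DenseRange J)
    (H0 : Submodule ℂ H1) [CompleteSpace H0]
    (hH0dense : DenseRange (fun v : H0 => J v))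
    (TN : H →L[ℂ] H1) (hTN : ∀ (u : H) (v : H1), ⟪TN u, v⟫ = ⟪u, J v⟫)
    (TD : H →L[ℂ] H1) (hTDmem : ∀ u : H, TD u ∈ H0)
    (hTD : ∀ (u : H), ∀ v ∈ H0, ⟪TD u, (v : H1)⟫ = ⟪u, J v⟫)
    (lam : ℝ)
    (RN : H →L[ℂ] H1)
    (hRN : ∀ (f : H) (u : H1), RN f = u ↔ TN (f + (lam : ℂ) • J u) = u)
    (RD : H →L[ℂ] H1)
    (hRD : ∀ (f : H) (u : H1), RD f = u ↔ TD (f + (lam : ℂ) • J u) = u)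
    (Gl : Submodule ℂ H1) [CompleteSpace Gl]
    (hGl : ∀ u : H1, u ∈ Gl ↔ MemA J H0 u ((lam : ℂ) • J u))
    (Bl : Gl →L[ℂ] Gl)
    (hBl : Bl = ContinuousLinearMap.id ℂ Gl -
      (lam : ℂ) • (Gl.orthogonalProjectionOnto.comp ((TN.comp J).comp Gl.subtypeL))) :
    ∃ hm : ∀ u : H, RN u - RD u ∈ Gl,
      -- the range of `R'(λ)` is dense in `G_λ` w.r.t. the `a`-norm
      closure (Set.range fun u : H => RN u - RD u) = (Gl : Set H1) ∧
      -- `a[B_λ R'(λ)u, R'(λ)v] = (u, R'(λ)v)`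
      (∀ u v : H, ⟪((Bl ⟨RN u - RD u, hm u⟩ : Gl) : H1), RN v - RD v⟫
          = ⟪u, J (RN v - RD v)⟫) ∧
      -- `B_λ R'(λ) = Π'_λ A_N⁻¹`
      (∀ u : H, Bl ⟨RN u - RD u, hm u⟩ = Gl.orthogonalProjectionOnto (TN u)) ∧
      -- `B_λ` is invertible, so `R'(λ) = B_λ⁻¹ Π'_λ A_N⁻¹`
      Function.Bijective Bl :=
  stmt15_general J hJinj H0 TN hTN TD hTDmem hTD lam RN hRN RD hRD Gl hGl Bl hBl
end
end

section
/- With the notation above, for z ∉ σ_ess(A_B) define P_B(z) := R_B(z)E'_B(z)(A − zI) on H¹_A, where R_B(z) is the resolvent restricted to the range of E'_B(z) := I − E_B(z). Then P_B(z) is a projection (P_B(z)² = P_B(z)) on H¹_A, with range E'_B(z)D(A_B) and with P'_B(z) := I − P_B(z) having range G_{z,B} := {v ∈ H¹_A : (A − zI)v ∈ E_B(z)H}. -/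
noncomputable section

open scoped InnerProductSpace

local notation "⟪" x ", " y "⟫" => @inner ℂ _ _ x y

variable {H H1 : Type*} [NormedAddCommGroup H] [InnerProductSpace ℂ H] [CompleteSpace H]
  [NormedAddCommGroup H1] [InnerProductSpace ℂ H1] [CompleteSpace H1]

/- For `z ∉ σ_ess(A_B)`, `P_B(z) := R_B(z) E'_B(z) (A - z)` is a projection on
`H¹_A`, with range `E'_B(z) D(A_B)`, and `P'_B(z) = I - P_B(z)` has range
`G_{z,B} = {v ∈ H¹_A : (A - z) v ∈ E_B(z) H}`.

Encoding (covering both `B = N`, `V = H1`, and `B = D`, `V = H0` at once):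
`A_B` is generated by the form on the closed subspace `V ⊇ H0`, with inverse
`T : H → V ⊆ H1`; `EB` is the orthogonal projection onto `ker(A_B - z)`
(an eigenvector is `x = J (T (z • x))`); the reduced resolvent
`RB = R_B(z) E'_B(z)` satisfies `RB ∘ EB = 0`, `(A_B - z)(RB f) = f - EB f`
(i.e. `RB f = T ((f - EB f) + z • J (RB f))`), and `EB (J (RB f)) = 0`.
For `u ∈ H¹_A` with `A u = f`, `P_B(z) u = RB (f - z • J u)`, whose `A`-value is
`(g - EB g) + z • J (RB g)` where `g := f - z • J u`. -/
theorem stmt16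
    (J : H1 →L[ℂ] H) (hJinj : Function.Injective J) (hJdense : DenseRange J)
    (H0 : Submodule ℂ H1) [CompleteSpace H0]
    (hH0dense : DenseRange (fun v : H0 => J v))
    (V : Submodule ℂ H1) (hV : H0 ≤ V)
    (T : H →L[ℂ] H1) (hTmem : ∀ u : H, T u ∈ V)
    (hT : ∀ (u : H), ∀ v ∈ V, ⟪T u, (v : H1)⟫ = ⟪u, J v⟫)
    (z : ℂ)
    (EB : H →L[ℂ] H) (hEBsa : IsSelfAdjoint EB) (hEBidem : IsIdempotentElem EB)
    (hEBrange : ∀ x : H, EB x = x ↔ J (T (z • x)) = x)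
    (RB : H →L[ℂ] H1)
    (hRB0 : ∀ f : H, RB (EB f) = 0)
    (hRBres : ∀ f : H, T ((f - EB f) + z • J (RB f)) = RB f)
    (hRBperp : ∀ f : H, EB (J (RB f)) = 0) :
    (∀ (u : H1) (f : H), MemA J H0 u f →
      -- `P_B(z) u = RB (f - z • J u)` lies in `H¹_A`, with the indicated `A`-value
      (MemA J H0 (RB (f - z • J u))
          (((f - z • J u) - EB (f - z • J u)) + z • J (RB (f - z • J u)))) ∧
      -- `P_B(z)² = P_B(z)`
      RB (((((f - z • J u) - EB (f - z • J u)) + z • J (RB (f - z • J u)))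
            - z • J (RB (f - z • J u)))) = RB (f - z • J u) ∧
      -- `P_B(z) u ∈ E'_B(z) D(A_B)`
      (EB (J (RB (f - z • J u))) = 0 ∧ ∃ h : H, T h = RB (f - z • J u)) ∧
      -- `P'_B(z) u = u - P_B(z) u ∈ G_{z,B}`: its `(A - z)`-image lies in `E_B(z) H`
      EB ((f - ((((f - z • J u) - EB (f - z • J u)) + z • J (RB (f - z • J u)))))
            - z • J (u - RB (f - z • J u)))
        = (f - ((((f - z • J u) - EB (f - z • J u)) + z • J (RB (f - z • J u)))))
            - z • J (u - RB (f - z • J u))) ∧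
    -- every element of `E'_B(z) D(A_B)` is in the range of `P_B(z)`
    (∀ h : H, EB (J (T h)) = 0 →
      ∃ (u : H1) (f : H), MemA J H0 u f ∧ RB (f - z • J u) = T h) ∧
    -- every element of `G_{z,B}` is in the range of `P'_B(z)` (it is fixed by it)
    (∀ (v : H1) (f' : H), MemA J H0 v f' →
      EB (f' - z • J v) = f' - z • J v → RB (f' - z • J v) = 0) := by
  have hsym := hEBsa.isSymmetric
  refine ⟨fun u f hu => ?_, fun h hEB0 => ?_, fun v f' hv hfix => ?_⟩
  · set g := f - z • J u with hg
    refine ⟨?_, ?_, ⟨hRBperp g, ⟨(g - EB g) + z • J (RB g), hRBres g⟩⟩, ?_⟩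
    · intro v hv
      have := hT ((g - EB g) + z • J (RB g)) v (hV hv)
      rwa [hRBres g] at this
    · have : ((g - EB g) + z • J (RB g)) - z • J (RB g) = g - EB g := by abel
      rw [this, map_sub, hRB0, sub_zero]
    · have key : (f - ((g - EB g) + z • J (RB g))) - z • J (u - RB g) = EB g := by
        rw [hg]
        simp only [map_sub, smul_sub]
        abel
      rw [key]
      exact DFunLike.congr_fun hEBidem.eq g
  · -- surjectivity onto E'_B D(A_B)
    refine ⟨T h, h, fun v hv => hT h v (hV hv), ?_⟩
    set g := h - z • J (T h) with hg
    -- first: EB g = 0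
    have hEBg : EB g = 0 := by
      have hx : ∀ x : H, EB x = x → ⟪x, g⟫ = 0 := by
        intro x hxeq
        have hxJ : ⟪x, J (T h)⟫ = (0 : ℂ) := by
          calc ⟪x, J (T h)⟫ = ⟪EB x, J (T h)⟫ := by rw [hxeq]
            _ = ⟪x, EB (J (T h))⟫ := hsym x _
            _ = 0 := by rw [hEB0, inner_zero_right]
        have hxh : ⟪x, h⟫ = (0 : ℂ) := by
          have hx2 : J (T (z • x)) = x := (hEBrange x).mp hxeq
          calc ⟪x, h⟫ = ⟪J (T (z • x)), h⟫ := by rw [hx2]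
            _ = (starRingEnd ℂ) ⟪h, J (T (z • x))⟫ := (inner_conj_symm _ _).symm
            _ = (starRingEnd ℂ) ⟪T h, (T (z • x) : H1)⟫ := by
                rw [hT h (T (z • x)) (hTmem _)]
            _ = ⟪T (z • x), (T h : H1)⟫ := inner_conj_symm _ _
            _ = ⟪z • x, J (T h)⟫ := hT (z • x) (T h) (hTmem h)
            _ = (starRingEnd ℂ) z * ⟪x, J (T h)⟫ := inner_smul_left _ _ _
            _ = 0 := by rw [hxJ, mul_zero]
        rw [hg, inner_sub_right, hxh, inner_smul_right, hxJ, mul_zero, sub_zero]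
      have hEBg2 : EB (EB g) = EB g := DFunLike.congr_fun hEBidem.eq g
      have h1 : ⟪EB g, EB g⟫ = (0 : ℂ) := by
        calc ⟪EB g, EB g⟫ = ⟪EB (EB g), g⟫ := (hsym (EB g) g).symm
          _ = ⟪EB g, g⟫ := by rw [hEBg2]
          _ = 0 := hx (EB g) hEBg2
      exact inner_self_eq_zero.mp h1
    -- now show RB g = T h
    obtain ⟨w, hw⟩ : ∃ w : H1, w = RB g - T h := ⟨_, rfl⟩
    have hw1 : w = T (z • J (RB g) - z • J (T h) - EB g) := by
      rw [hw]
      conv_lhs => rw [← hRBres g]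
      rw [← map_sub]
      congr 1
      conv_lhs => rw [hg]
      abel
    have hw2 : w = T (z • J w) := by
      conv_lhs => rw [hw1, hEBg, sub_zero]
      conv_rhs => rw [hw, map_sub, smul_sub]
    have hJw : EB (J w) = J w := by
      apply (hEBrange (J w)).mpr
      conv_lhs => rw [← hw2]
    have hJw0 : J w = 0 := by
      rw [← hJw, hw]
      simp [hRBperp, hEB0]
    have hw0 : w = 0 := hJinj (by rw [hJw0, map_zero])
    rw [← sub_eq_zero, ← hw]
    exact hw0
  · rw [← hfix]
    exact hRB0 _

end
end

section
/- With the notation above, for u, v ∈ H¹_A and real λ, μ with μ ∉ σ_ess(A_N): b[P'_N(λ)u, P'_N(μ)v] = b[u,v] − (u, E'_N(μ)(A − μI)v) + ((A − μI)u, R_N(μ)E'_N(μ)(A − μI)v), where b[u,v] := a[u,v] − (Au, v). -/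
noncomputable section

open scoped InnerProductSpace

local notation "⟪" x ", " y "⟫" => @inner ℂ _ _ x y

variable {H H1 : Type*} [NormedAddCommGroup H] [InnerProductSpace ℂ H] [CompleteSpace H]
  [NormedAddCommGroup H1] [InnerProductSpace ℂ H1] [CompleteSpace H1]

/- The identity (for `u, v ∈ H¹_A` and real `λ, μ` with `μ ∉ σ_ess(A_N)`):
`b[P'_N(λ)u, P'_N(μ)v] = b[u,v] - (u, E'_N(μ)(A-μ)v) + ((A-μ)u, R_N(μ)E'_N(μ)(A-μ)v)`,
where `b[x,y] = a[x,y] - (Ax, y)` and `P'_N(ν) = I - R_N(ν)E'_N(ν)(A - ν)`.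
Encoding: `EL, EM` are the eigenprojections of `A_N` at `λ` and `μ`, and
`RL, RM` the corresponding reduced resolvents `R_N(ν)E'_N(ν)` (as maps `H → H1`),
characterized as in `(A_N - ν)(R f) = f - E f`, `R ∘ E = 0`, `E ∘ J ∘ R = 0`. -/
theorem stmt17
    (J : H1 →L[ℂ] H) (hJinj : Function.Injective J) (hJdense : DenseRange J)
    (H0 : Submodule ℂ H1) [CompleteSpace H0]
    (hH0dense : DenseRange (fun v : H0 => J v))
    (TN : H →L[ℂ] H1) (hTN : ∀ (u : H) (v : H1), ⟪TN u, v⟫ = ⟪u, J v⟫)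
    (lam mu : ℝ)
    (EL : H →L[ℂ] H) (hELsa : IsSelfAdjoint EL) (hELidem : IsIdempotentElem EL)
    (hELrange : ∀ x : H, EL x = x ↔ J (TN ((lam : ℂ) • x)) = x)
    (RL : H →L[ℂ] H1)
    (hRL0 : ∀ f : H, RL (EL f) = 0)
    (hRLres : ∀ f : H, TN ((f - EL f) + (lam : ℂ) • J (RL f)) = RL f)
    (hRLperp : ∀ f : H, EL (J (RL f)) = 0)
    (EM : H →L[ℂ] H) (hEMsa : IsSelfAdjoint EM) (hEMidem : IsIdempotentElem EM)
    (hEMrange : ∀ x : H, EM x = x ↔ J (TN ((mu : ℂ) • x)) = x)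
    (RM : H →L[ℂ] H1)
    (hRM0 : ∀ f : H, RM (EM f) = 0)
    (hRMres : ∀ f : H, TN ((f - EM f) + (mu : ℂ) • J (RM f)) = RM f)
    (hRMperp : ∀ f : H, EM (J (RM f)) = 0) :
    ∀ (u v : H1) (fu fv : H), MemA J H0 u fu → MemA J H0 v fv →
      ∀ (pu pv : H1) (apu gu gv : H),
        gu = fu - (mu : ℂ) • J u →                -- `(A - μ) u`
        gv = fv - (mu : ℂ) • J v →                -- `(A - μ) v`
        pu = u - RL (fu - (lam : ℂ) • J u) →      -- `P'_N(λ) u`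
        pv = v - RM gv →                          -- `P'_N(μ) v`
        -- `A (P'_N(λ) u)`
        apu = fu - (((fu - (lam : ℂ) • J u) - EL (fu - (lam : ℂ) • J u))
                + (lam : ℂ) • J (RL (fu - (lam : ℂ) • J u))) →
        ⟪pu, pv⟫ - ⟪apu, J pv⟫
          = (⟪u, v⟫ - ⟪fu, J v⟫) - ⟪J u, gv - EM gv⟫ + ⟪gu, J (RM gv)⟫ := by
  intro u v fu fv hu hv pu pv apu gu gv hgu hgv hpu hpv hapu
  have h1 : ∀ (f : H) (w : H1),
      ⟪RL f, w⟫ = ⟪(f - EL f) + (lam : ℂ) • J (RL f), J w⟫ := fun f w => by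
    conv_lhs => rw [← hRLres f]
    rw [hTN]
  have h2' : ∀ (f : H) (w : H1),
      ⟪w, RM f⟫ = ⟪J w, (f - EM f) + (mu : ℂ) • J (RM f)⟫ := fun f w => by
    rw [← inner_conj_symm]
    conv_lhs => rw [← hRMres f]
    rw [hTN, inner_conj_symm]
  subst hgu hgv hpu hpv hapu
  rw [inner_sub_left, h1]
  rw [inner_sub_right u, h2']
  simp only [inner_sub_left, inner_sub_right, inner_add_right, inner_add_left,
    inner_smul_left, inner_smul_right, map_sub, Complex.conj_ofReal]
  ring

end
end

section
/- With the notation above, suppose H²₀ := H¹₀ ∩ D(A_N) is dense in H. Then the H-adjoint A* of the operator A : H¹_A → H coincides with the restriction of A to H²₀ = D(A_D) ∩ D(A_N); i.e., D(A*) = H²₀ and A*u = Au for u ∈ H²₀. Consequently A_N and A_D are self-adjoint extensions of the symmetric operator A|_{H²₀}. -/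
noncomputable section

open scoped InnerProductSpace

local notation "⟪" x ", " y "⟫" => @inner ℂ _ _ x y

variable {H H1 : Type*} [NormedAddCommGroup H] [InnerProductSpace ℂ H] [CompleteSpace H]
  [NormedAddCommGroup H1] [InnerProductSpace ℂ H1] [CompleteSpace H1]

/- Suppose `H²₀ := H¹₀ ∩ D(A_N) = D(A_D) ∩ D(A_N)` is dense in `H`.  Then the
`H`-adjoint `A*` of `A : H¹_A → H` is the restriction of `A` to `H²₀`:
`(x, A v) = (x̃, v)` for all `v ∈ H¹_A` iff `x = J u` with `u ∈ H²₀` and `x̃ = A u`.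
Here `D(A_N) = range TN`, `D(A_D) = range TD`, and for `u = TN g ∈ H²₀` one has
`A u = g`.  Consequently `A|_{H²₀}` is symmetric and `A_N`, `A_D` are its
self-adjoint extensions. -/
theorem stmt19
    (J : H1 →L[ℂ] H) (hJinj : Function.Injective J) (hJdense : DenseRange J)
    (H0 : Submodule ℂ H1) [CompleteSpace H0]
    (hH0dense : DenseRange (fun v : H0 => J v))
    (TN : H →L[ℂ] H1) (hTN : ∀ (u : H) (v : H1), ⟪TN u, v⟫ = ⟪u, J v⟫)
    (TD : H →L[ℂ] H1) (hTDmem : ∀ u : H, TD u ∈ H0)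
    (hTD : ∀ (u : H), ∀ v ∈ H0, ⟪TD u, (v : H1)⟫ = ⟪u, J v⟫)
    -- `H²₀` is dense in `H`
    (hdense : Dense {x : H | ∃ g : H, TN g ∈ H0 ∧ x = J (TN g)}) :
    -- `D(A*) = H²₀` and `A* u = A u` there
    (∀ x xt : H,
      (∀ (v : H1) (f : H), MemA J H0 v f → ⟪x, f⟫ = ⟪xt, J v⟫) ↔
        ∃ g : H, TN g ∈ H0 ∧ x = J (TN g) ∧ xt = g) ∧
    -- `H²₀ = D(A_D) ∩ D(A_N)`
    (∀ u : H1, (u ∈ H0 ∧ ∃ g : H, TN g = u) ↔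
        ((∃ g : H, TD g = u) ∧ ∃ g : H, TN g = u)) ∧
    -- `A|_{H²₀}` is symmetric
    (∀ g g' : H, TN g ∈ H0 → TN g' ∈ H0 →
      ⟪J (TN g), g'⟫ = ⟪g, J (TN g')⟫) := by
  refine ⟨?_, ?_, ?_⟩
  · intro x xt
    constructor
    · intro h
      have hN : ∀ f : H, ⟪x, f⟫ = ⟪J (TN xt), f⟫ := by
        intro f
        have hm : MemA J H0 (TN f) f := fun w _ => hTN f w
        calc ⟪x, f⟫ = ⟪xt, J (TN f)⟫ := h (TN f) f hm
          _ = ⟪TN xt, TN f⟫ := (hTN xt (TN f)).symm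
          _ = (starRingEnd ℂ) ⟪TN f, TN xt⟫ := (inner_conj_symm _ _).symm
          _ = (starRingEnd ℂ) ⟪f, J (TN xt)⟫ := by rw [hTN]
          _ = ⟪J (TN xt), f⟫ := inner_conj_symm _ _
      have hxN : x = J (TN xt) := ext_inner_right ℂ hN
      have hD : ∀ f : H, ⟪x, f⟫ = ⟪J (TD xt), f⟫ := by
        intro f
        have hm : MemA J H0 (TD f) f := fun w hw => hTD f w hw
        calc ⟪x, f⟫ = ⟪xt, J (TD f)⟫ := h (TD f) f hm
          _ = ⟪TD xt, TD f⟫ := (hTD xt (TD f) (hTDmem f)).symm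
          _ = (starRingEnd ℂ) ⟪TD f, TD xt⟫ := (inner_conj_symm _ _).symm
          _ = (starRingEnd ℂ) ⟪f, J (TD xt)⟫ := by
                rw [hTD f (TD xt) (hTDmem xt)]
          _ = ⟪J (TD xt), f⟫ := inner_conj_symm _ _
      have hxD : x = J (TD xt) := ext_inner_right ℂ hD
      have hND : TN xt = TD xt := hJinj (hxN.symm.trans hxD)
      exact ⟨xt, by rw [hND]; exact hTDmem xt, hxN, rfl⟩
    · rintro ⟨g, hgH0, rfl, rfl⟩
      intro v f hm
      calc ⟪J (TN xt), f⟫ = (starRingEnd ℂ) ⟪f, J (TN xt)⟫ := (inner_conj_symm _ _).symm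
        _ = (starRingEnd ℂ) ⟪v, TN xt⟫ := by rw [hm (TN xt) hgH0]
        _ = ⟪TN xt, v⟫ := inner_conj_symm _ _
        _ = ⟪xt, J v⟫ := hTN xt v
  · intro u
    constructor
    · rintro ⟨huH0, g, rfl⟩
      refine ⟨⟨g, ?_⟩, ⟨g, rfl⟩⟩
      have h0 : ∀ v ∈ H0, ⟪TD g - TN g, v⟫ = (0 : ℂ) := by
        intro v hv
        rw [inner_sub_left, hTD g v hv, hTN g v, sub_self]
      have hz : TD g - TN g = 0 := by
        have := h0 (TD g - TN g) (H0.sub_mem (hTDmem g) huH0)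
        simpa [inner_self_eq_zero] using this
      exact sub_eq_zero.mp hz
    · rintro ⟨⟨g, rfl⟩, hg⟩
      exact ⟨hTDmem g, hg⟩
  · intro g g' _ _
    calc ⟪J (TN g), g'⟫ = (starRingEnd ℂ) ⟪g', J (TN g)⟫ := (inner_conj_symm _ _).symm
      _ = (starRingEnd ℂ) ⟪TN g', TN g⟫ := by rw [hTN]
      _ = ⟪TN g, TN g'⟫ := inner_conj_symm _ _
      _ = ⟪g, J (TN g')⟫ := hTN g (TN g')

end
end
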